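/- arXiv:1912.02930 — 2 statements merged into one kernel-verified Lean document; each statement's English description precedes it below -/
import Mathlib

section
/- Let Λ be a free abelian group of finite rank r equipped with a positive definite quadratic form q. Then for every real H ≥ 0, the number of elements x ∈ Λ with q(x) ≤ H is at most (2√(H/m) + 1)^r, where m is the minimum of q on nonzero elements of Λ. -/
private theorem lenstra_parallelogram {Λ : Type*} [AddCommGroup Λ]
    (q : QuadraticMap ℤ Λ ℝ) (x y : Λ) :
    q (x + y) + q (x - y) = 2 * q x + 2 * q y := by
  have h1 : q (x + y) = q x + q y + QuadraticMap.polar q x y := by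
    rw [QuadraticMap.polar]; ring
  have h2 : q (x - y) = q x + q (-y) + QuadraticMap.polar q x (-y) := by
    rw [QuadraticMap.polar]; ring_nf; rw [sub_eq_add_neg]
  rw [h1, h2, QuadraticMap.polar_neg_right, QuadraticMap.map_neg]; ring

/-- **Lenstra counting lemma.** Let `Λ` be a free abelian group of finite rank
`r` with a positive definite quadratic form `q : Λ → ℝ`, and let `m` be the minimum of `q` on
nonzero elements.  Then for every `H ≥ 0`, the number of `x ∈ Λ` with `q x ≤ H` is at most
`(2√(H/m) + 1)^r`. -/
theorem lenstra_counting
    {Λ : Type*} [AddCommGroup Λ] [Module.Free ℤ Λ] [Module.Finite ℤ Λ]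
    (r : ℕ) (hr : Module.finrank ℤ Λ = r)
    (q : QuadraticMap ℤ Λ ℝ)
    (hpos : ∀ x : Λ, x ≠ 0 → 0 < q x)
    (m : ℝ) (hm : IsLeast {t : ℝ | ∃ x : Λ, x ≠ 0 ∧ q x = t} m)
    (H : ℝ) (hH : 0 ≤ H) :
    ({x : Λ | q x ≤ H}.ncard : ℝ) ≤ (2 * Real.sqrt (H / m) + 1) ^ r := by
  obtain ⟨⟨x₀, hx₀, hqx₀⟩, hlb⟩ := hm
  have hm0 : 0 < m := hqx₀ ▸ hpos x₀ hx₀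
  set c := Real.sqrt (H / m) with hc
  have hc0 : (0:ℝ) ≤ c := Real.sqrt_nonneg _
  have hc2 : c ^ 2 = H / m := Real.sq_sqrt (by positivity)
  set n : ℕ := Nat.floor (2 * c) + 1 with hn
  have hnz : NeZero n := ⟨Nat.succ_ne_zero _⟩
  have hn_gt : 2 * c < (n : ℝ) := by
    have := Nat.lt_floor_add_one (2 * c)
    rw [hn]; push_cast; push_cast at this; linarith
  have hn_le : (n : ℝ) ≤ 2 * c + 1 := by
    have := Nat.floor_le (by positivity : (0:ℝ) ≤ 2 * c)
    rw [hn]; push_cast; linarith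
  have hq0 : ∀ x : Λ, 0 ≤ q x := by
    intro x
    rcases eq_or_ne x 0 with h | h
    · simp [h]
    · exact (hpos x h).le
  -- the basis and the reduction map
  set ι := Module.Free.ChooseBasisIndex ℤ Λ
  set b : Module.Basis ι ℤ Λ := Module.Free.chooseBasis ℤ Λ
  have hcard : Fintype.card ι = r := by
    rw [← hr, Module.finrank_eq_card_chooseBasisIndex]
  set f : Λ → (ι → ZMod n) := fun x i => ((b.repr x i : ℤ) : ZMod n) with hf
  have hinj : Set.InjOn f {x : Λ | q x ≤ H} := by
    intro x hx y hy hxy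
    by_contra hne
    set d := x - y with hd
    have hdne : d ≠ 0 := sub_ne_zero.mpr hne
    -- each coordinate of d is divisible by n
    have hdvd : ∀ i, (n : ℤ) ∣ b.repr d i := by
      intro i
      have : ((b.repr d i : ℤ) : ZMod n) = 0 := by
        have hxyi : f x i = f y i := congrFun hxy i
        simp only [hf] at hxyi
        simp [hd, map_sub, sub_eq_zero, hxyi]
      exact (ZMod.intCast_zmod_eq_zero_iff_dvd _ _).mp this
    set z : Λ := ∑ i, (b.repr d i / (n : ℤ)) • b i with hz
    have hnz' : (n : ℤ) • z = d := by
      rw [hz, Finset.smul_sum]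
      have : ∀ i ∈ Finset.univ, (n : ℤ) • (b.repr d i / (n : ℤ)) • b i
          = (b.repr d i) • b i := by
        intro i _
        rw [smul_smul, Int.mul_ediv_cancel' (hdvd i)]
      rw [Finset.sum_congr rfl this, b.sum_repr]
    have hzne : z ≠ 0 := by
      intro h
      rw [h, smul_zero] at hnz'
      exact hdne hnz'.symm
    -- lower bound for q d
    have hqz : m ≤ q z := hlb ⟨z, hzne, rfl⟩
    have hqd_eq : q d = (n : ℝ) ^ 2 * q z := by
      rw [← hnz', QuadraticMap.map_smul, zsmul_eq_mul]
      push_cast; ring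
    have hlow : (n : ℝ) ^ 2 * m ≤ q d := by
      rw [hqd_eq]
      exact mul_le_mul_of_nonneg_left hqz (by positivity)
    -- upper bound for q d
    have hup : q d ≤ 4 * H := by
      have hpar := lenstra_parallelogram q x y
      have := hq0 (x + y)
      have hx' : q x ≤ H := hx
      have hy' : q y ≤ H := hy
      linarith
    -- contradiction
    have h1 : 4 * H < (n : ℝ) ^ 2 * m := by
      have h2 : (2 * c) ^ 2 < (n : ℝ) ^ 2 := by
        apply pow_lt_pow_left₀ hn_gt (by positivity)
        norm_num
      have h3 : (2 * c) ^ 2 * m = 4 * H := by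
        have : c ^ 2 * m = H := by rw [hc2]; field_simp
        calc (2 * c) ^ 2 * m = 4 * (c ^ 2 * m) := by ring
          _ = 4 * H := by rw [this]
      calc 4 * H = (2 * c) ^ 2 * m := h3.symm
        _ < (n : ℝ) ^ 2 * m := by
            exact mul_lt_mul_of_pos_right h2 hm0
    linarith
  -- counting
  have hcount : ({x : Λ | q x ≤ H}).ncard ≤ n ^ r := by
    calc ({x : Λ | q x ≤ H}).ncard = (f '' {x : Λ | q x ≤ H}).ncard :=
          (Set.ncard_image_of_injOn hinj).symm
      _ ≤ (Set.univ : Set (ι → ZMod n)).ncard :=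
          Set.ncard_le_ncard (Set.subset_univ _) Set.finite_univ
      _ = Nat.card (ι → ZMod n) := Set.ncard_univ _
      _ = n ^ r := by
          simp [Nat.card_eq_fintype_card, Fintype.card_fun, ZMod.card, hcard]
  calc (({x : Λ | q x ≤ H}).ncard : ℝ) ≤ (n : ℝ) ^ r := by exact_mod_cast hcount
    _ ≤ (2 * c + 1) ^ r := pow_le_pow_left₀ (by positivity) hn_le r
end

section
/- Let f : X → Y be a morphism of schemes with X having a set of associated points Ass(X), and let D be an effective Cartier divisor on Y. Then the pullback f*D is defined as an effective Cartier divisor on X if and only if f(Ass(X)) ∩ supp(D) = ∅, and in that case supp(f*D) = f⁻¹(supp D). -/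
/-- Let `f : X → Y` be a morphism of schemes and `D` an effective Cartier
divisor on `Y`.  Then the pullback `f*D` is defined as an effective Cartier divisor on `X` iff
`f(Ass X) ∩ supp D = ∅`, in which case `supp (f*D) = f⁻¹(supp D)`.

Encoding (affine-local version, where everything happens): `Y = Spec R`, `X = Spec S` with `S`
Noetherian, `f` given by `φ : R →+* S`, and `D` cut out by a nonzerodivisor `a ∈ R`.  The
pullback `f*D` is defined iff `φ a` is a nonzerodivisor in `S`, which holds iff the image under
`f` of no associated point of `X` (associated prime of `S`) lies in `supp D = V(a)`; in that
case the support of `f*D`, namely `V(φ a)`, equals `f⁻¹(V(a))`. -/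
theorem pullback_effective_cartier_divisor_defined_iff
    {R S : Type*} [CommRing R] [CommRing S] [IsNoetherianRing S]
    (φ : R →+* S) (a : R) (ha : a ∈ nonZeroDivisors R) :
    (φ a ∈ nonZeroDivisors S ↔ ∀ p ∈ associatedPrimes S S, a ∉ p.comap φ) ∧
    (φ a ∈ nonZeroDivisors S →
      {q : PrimeSpectrum S | φ a ∈ q.asIdeal} =
        PrimeSpectrum.comap φ ⁻¹' {q : PrimeSpectrum R | a ∈ q.asIdeal}) := by
  constructor
  · have h := biUnion_associatedPrimes_eq_zero_divisors S S
    constructor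
    · intro hnzd p hp hap
      have : φ a ∈ ⋃ p ∈ associatedPrimes S S, (p : Set S) :=
        Set.mem_biUnion hp hap
      rw [h] at this
      obtain ⟨x, hx, hxa⟩ := this
      exact hx (hnzd.2 x (by rwa [smul_eq_mul, mul_comm] at hxa))
    · intro hp
      rw [mem_nonZeroDivisors_iff_right]
      intro x hx
      by_contra hx0
      have : φ a ∈ ⋃ p ∈ associatedPrimes S S, (p : Set S) := by
        rw [h]; exact ⟨x, hx0, by rwa [smul_eq_mul, mul_comm]⟩
      obtain ⟨p, hpmem, hap⟩ := Set.mem_iUnion₂.mp this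
      exact hp p hpmem hap
  · intro _
    ext q
    simp [PrimeSpectrum.comap, Ideal.mem_comap]
end
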